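/- Let n ∈ ℕ and let E and E' be linear subspaces of ℝ^n such that ‖Π_E Π_{(E')^⊥}‖₂ < 1, where ‖·‖₂ is the operator (spectral) norm. Then there exists a linear subspace Ẽ ⊆ E' with dim Ẽ = dim E such that ‖Π_E − Π_{Ẽ}‖²_F ≤ 8·‖Π_E Π_{(E')^⊥}‖²_F. -/

import Mathlib

open MeasureTheory

/-- The standard Gaussian measure `γ_n` on `ℝ^n`: the product of `n` i.i.d. standard
Gaussians `N(0,1)`, transported to `EuclideanSpace ℝ (Fin n)`. -/
noncomputable def stdGaussian (n : ℕ) : Measure (EuclideanSpace ℝ (Fin n)) :=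
  (Measure.pi fun _ : Fin n => ProbabilityTheory.gaussianReal 0 1).map
    (MeasurableEquiv.toLp 2 (Fin n → ℝ))

/-- The orthogonal projection `Π_E` onto a subspace `E`, as a map of the ambient space. -/
noncomputable def proj {n : ℕ} (E : Submodule ℝ (EuclideanSpace ℝ (Fin n)))
    (x : EuclideanSpace ℝ (Fin n)) : EuclideanSpace ℝ (Fin n) :=
  (Submodule.orthogonalProjectionOnto E x : EuclideanSpace ℝ (Fin n))

/-- The averaging operator `A_E`: `(A_E f)(x) = ∫ f(Π_E x + Π_{E^⊥} z) dγ_n(z)`. -/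
noncomputable def avg {n : ℕ} (E : Submodule ℝ (EuclideanSpace ℝ (Fin n)))
    (f : EuclideanSpace ℝ (Fin n) → ℝ) (x : EuclideanSpace ℝ (Fin n)) : ℝ :=
  ∫ z, f (proj E x + proj Eᗮ z) ∂(stdGaussian n)

/-- The Ornstein–Uhlenbeck noise operator `P_t`:
`(P_t f)(x) = ∫ f(e^{-t} x + √(1 - e^{-2t}) y) dγ_n(y)`. -/
noncomputable def ouOp {n : ℕ} (t : ℝ) (f : EuclideanSpace ℝ (Fin n) → ℝ)
    (x : EuclideanSpace ℝ (Fin n)) : ℝ :=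
  ∫ y, f (Real.exp (-t) • x + Real.sqrt (1 - Real.exp (-2 * t)) • y) ∂(stdGaussian n)

/-- A function `f : ℝ^n → [-1,1]` is `s`-smooth if `∫ |f - P_t f| dγ_n ≤ s·√t` for all `t > 0`. -/
def SSmooth {n : ℕ} (s : ℝ) (f : EuclideanSpace ℝ (Fin n) → ℝ) : Prop :=
  ∀ t : ℝ, 0 < t → ∫ x, |f x - ouOp t f x| ∂(stdGaussian n) ≤ s * Real.sqrt t

/-- `f` is `c`-Lipschitz (with a real constant `c`). -/
def LipschitzC {E : Type*} [NormedAddCommGroup E] (c : ℝ) (f : E → ℝ) : Prop :=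
  ∀ x y, |f x - f y| ≤ c * ‖x - y‖

/-- `h : ℝ^n → ℝ` is a linear `k`-junta: it depends only on the projection onto a
subspace of dimension at most `k`. -/
def IsLinearJunta {n : ℕ} (k : ℕ) (h : EuclideanSpace ℝ (Fin n) → ℝ) : Prop :=
  ∃ F : Submodule ℝ (EuclideanSpace ℝ (Fin n)), Module.finrank ℝ F ≤ k ∧
    ∀ x z, proj F x = proj F z → h x = h z

/-- Frobenius norm of a matrix. -/
noncomputable def frobNorm {m n : ℕ} (M : Matrix (Fin m) (Fin n) ℝ) : ℝ :=
  Real.sqrt (∑ i, ∑ j, (M i j) ^ 2)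

/-- Operator (spectral) norm of a matrix. -/
noncomputable def specNorm {m n : ℕ} (M : Matrix (Fin m) (Fin n) ℝ) : ℝ :=
  ‖LinearMap.toContinuousLinearMap (Matrix.toEuclideanLin M)‖

/-- The `n×n` matrix of the orthogonal projection onto `E`. -/
noncomputable def projMatrix {n : ℕ} (E : Submodule ℝ (EuclideanSpace ℝ (Fin n))) :
    Matrix (Fin n) (Fin n) ℝ :=
  Matrix.of fun i j => proj E (EuclideanSpace.single j (1 : ℝ)) i

/-- View a vector of `ℝ^n` as a plain function `Fin n → ℝ`. -/
noncomputable def toPi {n : ℕ} (x : EuclideanSpace ℝ (Fin n)) : Fin n → ℝ := fun i => x i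

/-- View a plain function `Fin n → ℝ` as a vector of `ℝ^n`. -/
noncomputable def ofPi {n : ℕ} (v : Fin n → ℝ) : EuclideanSpace ℝ (Fin n) :=
  (EuclideanSpace.equiv (Fin n) ℝ).symm v


/-!
Take `Ẽ = Π_{E'} E`. A vector `x ∈ E` with `Π_{E'} x = 0` satisfies `x = Π_E Π_{E'^⊥} x`, which
the spectral bound `‖Π_E Π_{E'^⊥}‖₂ < 1` forbids unless `x = 0`; so `Π_{E'}` is injective on `E`
and `dim Ẽ = dim E`. For orthogonal projections `P`, `Q` of equal trace,
`‖P - Q‖²_F = tr P + tr Q - 2 tr PQ = 2 ‖(1 - Q) P‖²_F`. Finally, every column `u = Π_E e_j`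
satisfies `‖Π_{Ẽ^⊥} u‖ ≤ ‖Π_{E'^⊥} u‖`, since `Π_{E'} u ∈ Ẽ`; hence
`‖Π_E - Π_Ẽ‖²_F = 2 ‖Π_{Ẽ^⊥} Π_E‖²_F ≤ 2 ‖Π_{E'^⊥} Π_E‖²_F`.
-/

open Matrix

namespace Submodule

variable {𝕜 V : Type*} [RCLike 𝕜] [NormedAddCommGroup V] [InnerProductSpace 𝕜 V]

theorem norm_sub_starProjection_le {K : Submodule 𝕜 V} [K.HasOrthogonalProjection] (u : V)
    {w : V} (hw : w ∈ K) : ‖u - K.starProjection u‖ ≤ ‖u - w‖ := by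
  rw [starProjection_minimal]
  exact ciInf_le ⟨0, Set.forall_mem_range.mpr fun _ ↦ norm_nonneg _⟩ (⟨w, hw⟩ : K)

theorem disjoint_orthogonal_of_norm_starProjection_comp_lt_one {E F : Submodule 𝕜 V}
    [E.HasOrthogonalProjection] [F.HasOrthogonalProjection]
    (h : ‖E.starProjection ∘L Fᗮ.starProjection‖ < 1) : Disjoint E Fᗮ := by
  rw [disjoint_iff_inf_le]
  rintro x ⟨hxE, hxF⟩
  have hx : (E.starProjection ∘L Fᗮ.starProjection) x = x := by
    simp [starProjection_eq_self_iff.mpr hxE, starProjection_eq_self_iff.mpr hxF]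
  have hle : ‖x‖ ≤ ‖E.starProjection ∘L Fᗮ.starProjection‖ * ‖x‖ := by
    simpa only [hx] using (E.starProjection ∘L Fᗮ.starProjection).le_opNorm x
  exact norm_le_zero_iff.mp (by nlinarith [norm_nonneg x])

variable [FiniteDimensional 𝕜 V] {E F : Submodule 𝕜 V}

theorem finrank_map_starProjection (h : Disjoint E Fᗮ) :
    Module.finrank 𝕜 (E.map F.starProjection.toLinearMap) = Module.finrank 𝕜 E := by
  have hinj : Function.Injective (F.starProjection.toLinearMap.domRestrict E) := by
    simpa using h
  rw [← LinearMap.range_domRestrict, LinearMap.finrank_range_of_inj hinj]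

theorem norm_sub_starProjection_map_le {u : V} (hu : u ∈ E) :
    ‖u - (E.map F.starProjection.toLinearMap).starProjection u‖ ≤ ‖u - F.starProjection u‖ :=
  norm_sub_starProjection_le u (mem_map_of_mem hu)

end Submodule

theorem Matrix.trace_transpose_mul_self_sub_of_isIdempotentElem {ι R : Type*} [Fintype ι]
    [DecidableEq ι] [CommRing R] {P Q : Matrix ι ι R} (hPs : P.IsSymm) (hQs : Q.IsSymm)
    (hP : IsIdempotentElem P) (hQ : IsIdempotentElem Q) (htr : P.trace = Q.trace) :
    ((P - Q)ᵀ * (P - Q)).trace = 2 * (((1 - Q) * P)ᵀ * ((1 - Q) * P)).trace := by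
  have hPQP : (P * Q * P).trace = (P * Q).trace := by
    rw [trace_mul_cycle, hP.eq]
  rw [transpose_sub, transpose_mul, transpose_sub, transpose_one, hPs.eq, hQs.eq]
  have h1 : (P - Q) * (P - Q) = P * P - P * Q - Q * P + Q * Q := by noncomm_ring
  have h2 : P * (1 - Q) * ((1 - Q) * P) = P * P - P * Q * P - (P * Q * P - P * Q * Q * P) := by
    noncomm_ring
  rw [h1, h2, hP.eq, hQ.eq, mul_assoc P Q Q, hQ.eq]
  simp only [trace_add, trace_sub, hPQP, trace_mul_comm Q P, htr]
  ring

section frobNorm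

variable {m n : ℕ}

theorem frobNorm_sq (M : Matrix (Fin m) (Fin n) ℝ) : frobNorm M ^ 2 = ∑ i, ∑ j, M i j ^ 2 :=
  Real.sq_sqrt (by positivity)

theorem frobNorm_transpose (M : Matrix (Fin m) (Fin n) ℝ) : frobNorm Mᵀ = frobNorm M := by
  rw [frobNorm, frobNorm, Finset.sum_comm]
  rfl

theorem frobNorm_sq_eq_trace (M : Matrix (Fin m) (Fin n) ℝ) :
    frobNorm M ^ 2 = (Mᵀ * M).trace := by
  rw [frobNorm_sq, Finset.sum_comm]
  simp [trace, mul_apply, sq]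

theorem frobNorm_sq_eq_sum_norm_sq (M : Matrix (Fin m) (Fin n) ℝ) :
    frobNorm M ^ 2 = ∑ j, ‖toEuclideanLin M (EuclideanSpace.single j 1)‖ ^ 2 := by
  rw [frobNorm_sq, Finset.sum_comm]
  simp [EuclideanSpace.real_norm_sq_eq, toLpLin_apply]

end frobNorm

section projMatrix

variable {n : ℕ} (E F : Submodule ℝ (EuclideanSpace ℝ (Fin n)))

theorem toEuclideanLin_projMatrix :
    toEuclideanLin (projMatrix E) = E.starProjection.toLinearMap := by
  rw [← LinearEquiv.eq_symm_apply, toEuclideanLin_eq_toLin_orthonormal, Matrix.toLin_symm]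
  ext i j
  simp [LinearMap.toMatrix_apply, projMatrix, proj]

theorem projMatrix_isSymm : (projMatrix E).IsSymm := by
  rw [← isHermitian_iff_isSymm, ← isSymmetric_toEuclideanLin_iff, toEuclideanLin_projMatrix]
  exact E.starProjection_isSymmetric

theorem isIdempotentElem_projMatrix : IsIdempotentElem (projMatrix E) := by
  apply (toLpLin 2 2).injective
  rw [toLpLin_mul_same, toEuclideanLin_projMatrix]
  exact ContinuousLinearMap.isIdempotentElem_toLinearMap_iff.mpr E.isIdempotentElem_starProjection

theorem trace_projMatrix : (projMatrix E).trace = Module.finrank ℝ E := by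
  have hproj : LinearMap.IsProj E E.starProjection.toLinearMap :=
    ⟨E.starProjection_apply_mem, fun _ hx ↦ Submodule.starProjection_eq_self_iff.mpr hx⟩
  rw [← hproj.trace, ← toEuclideanLin_projMatrix, toEuclideanLin_eq_toLin_orthonormal,
    Matrix.trace_toLin_eq]

theorem projMatrix_orthogonal : projMatrix Eᗮ = 1 - projMatrix E := by
  apply (toLpLin 2 2).injective
  simp [toEuclideanLin_projMatrix, E.starProjection_orthogonal]

theorem specNorm_projMatrix_mul :
    specNorm (projMatrix E * projMatrix F) = ‖E.starProjection ∘L F.starProjection‖ := by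
  rw [specNorm, toLpLin_mul_same, toEuclideanLin_projMatrix, toEuclideanLin_projMatrix]
  rfl

theorem frobNorm_projMatrix_mul_comm :
    frobNorm (projMatrix E * projMatrix F) = frobNorm (projMatrix F * projMatrix E) := by
  rw [← frobNorm_transpose, transpose_mul, (projMatrix_isSymm E).eq, (projMatrix_isSymm F).eq]

variable {E F}

theorem frobNorm_sq_projMatrix_sub (h : Module.finrank ℝ E = Module.finrank ℝ F) :
    frobNorm (projMatrix E - projMatrix F) ^ 2
      = 2 * frobNorm (projMatrix Fᗮ * projMatrix E) ^ 2 := by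
  rw [frobNorm_sq_eq_trace, frobNorm_sq_eq_trace, projMatrix_orthogonal]
  exact trace_transpose_mul_self_sub_of_isIdempotentElem (projMatrix_isSymm E)
    (projMatrix_isSymm F) (isIdempotentElem_projMatrix E) (isIdempotentElem_projMatrix F)
    (by rw [trace_projMatrix, trace_projMatrix, h])

theorem frobNorm_sq_mul_projMatrix_le {m : ℕ} {A B : Matrix (Fin m) (Fin n) ℝ}
    (h : ∀ u ∈ E, ‖toEuclideanLin A u‖ ≤ ‖toEuclideanLin B u‖) :
    frobNorm (A * projMatrix E) ^ 2 ≤ frobNorm (B * projMatrix E) ^ 2 := by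
  simp only [frobNorm_sq_eq_sum_norm_sq, toLpLin_mul_same, toEuclideanLin_projMatrix,
    LinearMap.comp_apply]
  gcongr with j
  exact h _ (E.starProjection_apply_mem _)

end projMatrix

/-- if `‖Π_E Π_{(E')^⊥}‖₂ < 1`, then `E'` contains a subspace `Ẽ` of the
same dimension as `E` with `‖Π_E − Π_Ẽ‖²_F ≤ 8·‖Π_E Π_{(E')^⊥}‖²_F`. -/
theorem subspace_distance {n : ℕ} (E E' : Submodule ℝ (EuclideanSpace ℝ (Fin n)))
    (hle : specNorm (projMatrix E * projMatrix E'ᗮ) < 1) :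
    ∃ Et : Submodule ℝ (EuclideanSpace ℝ (Fin n)), Et ≤ E' ∧
      Module.finrank ℝ Et = Module.finrank ℝ E ∧
      frobNorm (projMatrix E - projMatrix Et) ^ 2
        ≤ 8 * frobNorm (projMatrix E * projMatrix E'ᗮ) ^ 2 := by
  set Et := E.map E'.starProjection.toLinearMap
  have hdim : Module.finrank ℝ Et = Module.finrank ℝ E :=
    Submodule.finrank_map_starProjection <|
      Submodule.disjoint_orthogonal_of_norm_starProjection_comp_lt_one <|
        specNorm_projMatrix_mul E E'ᗮ ▸ hle
  have hcol : frobNorm (projMatrix Etᗮ * projMatrix E) ^ 2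
      ≤ frobNorm (projMatrix E'ᗮ * projMatrix E) ^ 2 :=
    frobNorm_sq_mul_projMatrix_le fun u hu ↦ by
      simpa [toEuclideanLin_projMatrix] using Submodule.norm_sub_starProjection_map_le hu
  refine ⟨Et, Submodule.map_le_iff_le_comap.mpr fun x _ ↦ E'.starProjection_apply_mem x, hdim, ?_⟩
  rw [frobNorm_sq_projMatrix_sub hdim.symm, frobNorm_projMatrix_mul_comm E]
  linarith [sq_nonneg (frobNorm (projMatrix E'ᗮ * projMatrix E))]
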